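/- Let X1, X2, X3 be mutually independent finite random variables and Y, Z two other finite random variables. Then I(X1, X2, X3; Y) - I(X1, X2, X3; Z) + I(X3; Y | X1, X2) ≤ I(X1, X3; Y | X2) - I(X1, X2, X3; Z) + I(X2, X3; Y | X1). -/
import Mathlib

open Finset

noncomputable def rvDist {Ω : Type*} [Fintype Ω] {A : Type*} [Fintype A] [DecidableEq A]
    (p : Ω → ℝ) (X : Ω → A) (a : A) : ℝ :=
  ∑ ω, if X ω = a then p ω else 0

noncomputable def rvEnt {Ω : Type*} [Fintype Ω] {A : Type*} [Fintype A] [DecidableEq A]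
    (p : Ω → ℝ) (X : Ω → A) : ℝ :=
  ∑ a, Real.negMulLog (rvDist p X a)

section Aux

variable {Ω : Type*} [Fintype Ω] {A B C : Type*} [Fintype A] [DecidableEq A]
  [Fintype B] [DecidableEq B] [Fintype C] [DecidableEq C]

lemma rvDist_nonneg' (p : Ω → ℝ) (hp : ∀ ω, 0 ≤ p ω) (X : Ω → A) (a : A) :
    0 ≤ rvDist p X a := by
  unfold rvDist
  exact Finset.sum_nonneg fun ω _ => by split <;> simp [hp ω]

lemma rvDist_sum' (p : Ω → ℝ) (hsum : ∑ ω, p ω = 1) (X : Ω → A) :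
    ∑ a, rvDist p X a = 1 := by
  unfold rvDist
  rw [Finset.sum_comm, ← hsum]
  exact Finset.sum_congr rfl fun ω _ => by simp

lemma rvDist_pair_fst (p : Ω → ℝ) (X : Ω → A) (Y : Ω → B) (a : A) :
    ∑ b, rvDist p (fun ω => (X ω, Y ω)) (a, b) = rvDist p X a := by
  unfold rvDist
  rw [Finset.sum_comm]
  refine Finset.sum_congr rfl fun ω _ => ?_
  by_cases h : X ω = a <;> simp [Prod.ext_iff, h]

lemma rvDist_pair_snd (p : Ω → ℝ) (X : Ω → A) (Y : Ω → B) (b : B) :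
    ∑ a, rvDist p (fun ω => (X ω, Y ω)) (a, b) = rvDist p Y b := by
  unfold rvDist
  rw [Finset.sum_comm]
  refine Finset.sum_congr rfl fun ω _ => ?_
  by_cases h : Y ω = b <;> simp [Prod.ext_iff, h]

lemma rvDist_triple_mid (p : Ω → ℝ) (X : Ω → A) (Y : Ω → B) (Z : Ω → C) (a : A) (c : C) :
    ∑ b, rvDist p (fun ω => (X ω, Y ω, Z ω)) (a, b, c)
      = rvDist p (fun ω => (X ω, Z ω)) (a, c) := by
  unfold rvDist
  rw [Finset.sum_comm]
  refine Finset.sum_congr rfl fun ω _ => ?_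
  by_cases h1 : X ω = a <;> by_cases h2 : Z ω = c <;> simp [Prod.ext_iff, h1, h2]

lemma rvDist_triple_fst (p : Ω → ℝ) (X : Ω → A) (Y : Ω → B) (Z : Ω → C) (b : B) (c : C) :
    ∑ a, rvDist p (fun ω => (X ω, Y ω, Z ω)) (a, b, c)
      = rvDist p (fun ω => (Y ω, Z ω)) (b, c) := by
  unfold rvDist
  rw [Finset.sum_comm]
  refine Finset.sum_congr rfl fun ω _ => ?_
  by_cases h1 : Y ω = b <;> by_cases h2 : Z ω = c <;> simp [Prod.ext_iff, h1, h2]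

lemma rvDist_triple_thd (p : Ω → ℝ) (X : Ω → A) (Y : Ω → B) (Z : Ω → C) (a : A) (b : B) :
    ∑ c, rvDist p (fun ω => (X ω, Y ω, Z ω)) (a, b, c)
      = rvDist p (fun ω => (X ω, Y ω)) (a, b) := by
  unfold rvDist
  rw [Finset.sum_comm]
  refine Finset.sum_congr rfl fun ω _ => ?_
  by_cases h1 : X ω = a <;> by_cases h2 : Y ω = b <;> simp [Prod.ext_iff, h1, h2]

lemma rvEnt_comp (p : Ω → ℝ) (X : Ω → A) (e : A → B) (he : Function.Injective e) :
    rvEnt p (fun ω => e (X ω)) = rvEnt p X := by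
  unfold rvEnt
  calc ∑ b : B, Real.negMulLog (rvDist p (fun ω => e (X ω)) b)
      = ∑ b ∈ Finset.univ.image e, Real.negMulLog (rvDist p (fun ω => e (X ω)) b) := by
        refine (Finset.sum_subset (Finset.subset_univ _) fun b _ hb => ?_).symm
        have h0 : rvDist p (fun ω => e (X ω)) b = 0 := by
          unfold rvDist
          refine Finset.sum_eq_zero fun ω _ => ?_
          have : e (X ω) ≠ b := fun h => hb (Finset.mem_image.2 ⟨X ω, Finset.mem_univ _, h⟩)
          simp [this]
        simp [h0]
    _ = ∑ a : A, Real.negMulLog (rvDist p (fun ω => e (X ω)) (e a)) :=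
        Finset.sum_image (fun a _ b _ h => he h)
    _ = ∑ a : A, Real.negMulLog (rvDist p X a) := by
        refine Finset.sum_congr rfl fun a _ => ?_
        congr 1
        unfold rvDist
        exact Finset.sum_congr rfl fun ω _ => by simp [he.eq_iff]

end Aux

section Slice
open Finset Real

lemma submod_slice {A B : Type*} [Fintype A] [Fintype B] (q : A → B → ℝ)
    (hq : ∀ a b, 0 ≤ q a b) :
    (∑ a, ∑ b, Real.negMulLog (q a b)) + Real.negMulLog (∑ a, ∑ b, q a b)
      ≤ (∑ a, Real.negMulLog (∑ b, q a b)) + ∑ b, Real.negMulLog (∑ a, q a b) := by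
  classical
  set qA : A → ℝ := fun a => ∑ b, q a b with hqA
  set qB : B → ℝ := fun b => ∑ a, q a b with hqB
  set s : ℝ := ∑ a, ∑ b, q a b with hs
  have hqA0 : ∀ a, 0 ≤ qA a := fun a => Finset.sum_nonneg fun b _ => hq a b
  have hqB0 : ∀ b, 0 ≤ qB b := fun b => Finset.sum_nonneg fun a _ => hq a b
  have hs0 : 0 ≤ s := Finset.sum_nonneg fun a _ => hqA0 a
  have hle_qA : ∀ a b, q a b ≤ qA a := fun a b =>
    Finset.single_le_sum (fun b _ => hq a b) (Finset.mem_univ b)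
  have hle_qB : ∀ a b, q a b ≤ qB b := fun a b =>
    Finset.single_le_sum (fun a' _ => hq a' b) (Finset.mem_univ a)
  have hle_s : ∀ a, qA a ≤ s := fun a =>
    Finset.single_le_sum (fun a' _ => hqA0 a') (Finset.mem_univ a)
  have hsA : ∑ a, qA a = s := rfl
  have hsB : ∑ b, qB b = s := by rw [hqB, hs, Finset.sum_comm]
  set r : A → B → ℝ := fun a b => if 0 < q a b then qA a * qB b / s else 0 with hr
  have key : ∀ a b,
      Real.negMulLog (q a b) + q a b * Real.log (qA a) + q a b * Real.log (qB b)
        - q a b * Real.log s ≤ r a b - q a b := by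
    intro a b
    rcases eq_or_lt_of_le (hq a b) with h | h
    · simp [hr, ← h, Real.negMulLog]
    · have hA : 0 < qA a := lt_of_lt_of_le h (hle_qA a b)
      have hB : 0 < qB b := lt_of_lt_of_le h (hle_qB a b)
      have hS : 0 < s := lt_of_lt_of_le hA (hle_s a)
      have hrr : r a b = qA a * qB b / s := by simp [hr, h]
      have hx : 0 < qA a * qB b / (q a b * s) := by positivity
      have hlog := Real.log_le_sub_one_of_pos hx
      have hlogeq : Real.log (qA a * qB b / (q a b * s))
          = Real.log (qA a) + Real.log (qB b) - Real.log (q a b) - Real.log s := by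
        rw [Real.log_div (by positivity) (by positivity), Real.log_mul hA.ne' hB.ne',
          Real.log_mul h.ne' hS.ne']
        ring
      have hmul := mul_le_mul_of_nonneg_left hlog (le_of_lt h)
      rw [hlogeq] at hmul
      have heq : q a b * (qA a * qB b / (q a b * s) - 1) = qA a * qB b / s - q a b := by
        field_simp
      rw [heq] at hmul
      rw [hrr]
      calc Real.negMulLog (q a b) + q a b * Real.log (qA a) + q a b * Real.log (qB b)
            - q a b * Real.log s
          = q a b * (Real.log (qA a) + Real.log (qB b) - Real.log (q a b) - Real.log s) := by
            rw [Real.negMulLog]; ring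
        _ ≤ qA a * qB b / s - q a b := hmul
  have hR : ∑ a, ∑ b, r a b ≤ s := by
    rcases eq_or_lt_of_le hs0 with h | h
    · have hz : ∀ a b, r a b = 0 := by
        intro a b
        have h1 := (hle_qA a b).trans (hle_s a)
        have hq0 : q a b ≤ 0 := by linarith [h.ge]
        simp [hr, not_lt.2 hq0]
      simp [hz]
      exact hs0
    · calc ∑ a, ∑ b, r a b ≤ ∑ a, ∑ b, qA a * qB b / s := by
            refine Finset.sum_le_sum fun a _ => Finset.sum_le_sum fun b _ => ?_
            by_cases hab : 0 < q a b
            · simp [hr, hab]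
            · simp only [hr, if_neg hab]
              exact div_nonneg (mul_nonneg (hqA0 a) (hqB0 b)) hs0
        _ = (∑ a, qA a) * (∑ b, qB b) / s := by
            rw [Finset.sum_mul, Finset.sum_div]
            refine Finset.sum_congr rfl fun a _ => ?_
            rw [Finset.mul_sum, Finset.sum_div]
        _ = s := by rw [hsA, hsB]; field_simp
  have hsumkey : ∑ a, ∑ b, (Real.negMulLog (q a b) + q a b * Real.log (qA a)
      + q a b * Real.log (qB b) - q a b * Real.log s) ≤ 0 := by
    calc ∑ a, ∑ b, (Real.negMulLog (q a b) + q a b * Real.log (qA a)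
          + q a b * Real.log (qB b) - q a b * Real.log s)
        ≤ ∑ a, ∑ b, (r a b - q a b) :=
          Finset.sum_le_sum fun a _ => Finset.sum_le_sum fun b _ => key a b
      _ = (∑ a, ∑ b, r a b) - s := by
          rw [hs, ← Finset.sum_sub_distrib]
          exact Finset.sum_congr rfl fun a _ => by rw [← Finset.sum_sub_distrib]
      _ ≤ 0 := by linarith
  have eA : ∑ a, Real.negMulLog (∑ b, q a b) = ∑ a, ∑ b, -(q a b * Real.log (qA a)) := by
    refine Finset.sum_congr rfl fun a _ => ?_
    rw [Finset.sum_neg_distrib, ← Finset.sum_mul, Real.negMulLog]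
    ring
  have eB : ∑ b, Real.negMulLog (∑ a, q a b) = ∑ a, ∑ b, -(q a b * Real.log (qB b)) := by
    rw [Finset.sum_comm]
    refine Finset.sum_congr rfl fun b _ => ?_
    rw [Finset.sum_neg_distrib, ← Finset.sum_mul, Real.negMulLog]
    ring
  have eS : Real.negMulLog s = ∑ a, ∑ b, -(q a b * Real.log s) := by
    simp only [Finset.sum_neg_distrib, ← Finset.sum_mul]
    rw [Real.negMulLog, ← hs]
    ring
  have hexp : (∑ a, ∑ b, Real.negMulLog (q a b)) + Real.negMulLog (∑ a, ∑ b, q a b)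
      - (∑ a, Real.negMulLog (∑ b, q a b)) - ∑ b, Real.negMulLog (∑ a, q a b)
      = ∑ a, ∑ b, (Real.negMulLog (q a b) + q a b * Real.log (qA a)
          + q a b * Real.log (qB b) - q a b * Real.log s) := by
    rw [← hs, eS, eA, eB]
    simp only [Finset.sum_add_distrib, Finset.sum_sub_distrib, Finset.sum_neg_distrib]
    ring
  linarith [hexp, hsumkey]

end Slice

/-- Mutual information `I(X; Y)`. -/
noncomputable def rvMI {Ω : Type*} [Fintype Ω] {A B : Type*} [Fintype A] [DecidableEq A]
    [Fintype B] [DecidableEq B] (p : Ω → ℝ) (X : Ω → A) (Y : Ω → B) : ℝ :=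
  rvEnt p X + rvEnt p Y - rvEnt p (fun ω => (X ω, Y ω))

/-- Conditional mutual information `I(X; Y | Z)`. -/
noncomputable def rvCMI {Ω : Type*} [Fintype Ω] {A B C : Type*} [Fintype A] [DecidableEq A]
    [Fintype B] [DecidableEq B] [Fintype C] [DecidableEq C]
    (p : Ω → ℝ) (X : Ω → A) (Y : Ω → B) (Z : Ω → C) : ℝ :=
  rvEnt p (fun ω => (X ω, Z ω)) + rvEnt p (fun ω => (Y ω, Z ω))
    - rvEnt p (fun ω => (X ω, Y ω, Z ω)) - rvEnt p Z

lemma submod3 {A B C : Type*} [Fintype A] [Fintype B] [Fintype C]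
    (q : A → B → C → ℝ) (hq : ∀ a b c, 0 ≤ q a b c) :
    (∑ a, ∑ b, ∑ c, Real.negMulLog (q a b c)) + ∑ c, Real.negMulLog (∑ a, ∑ b, q a b c)
      ≤ (∑ a, ∑ c, Real.negMulLog (∑ b, q a b c))
        + ∑ b, ∑ c, Real.negMulLog (∑ a, q a b c) := by
  have h := Finset.sum_le_sum (fun c (_ : c ∈ Finset.univ) =>
    submod_slice (fun a b => q a b c) (fun a b => hq a b c))
  rw [Finset.sum_add_distrib, Finset.sum_add_distrib] at h
  have e1 : (∑ a, ∑ b, ∑ c, Real.negMulLog (q a b c))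
      = ∑ c, ∑ a, ∑ b, Real.negMulLog (q a b c) := by
    calc (∑ a, ∑ b, ∑ c, Real.negMulLog (q a b c))
        = ∑ a, ∑ c, ∑ b, Real.negMulLog (q a b c) :=
          Finset.sum_congr rfl fun a _ => Finset.sum_comm
      _ = ∑ c, ∑ a, ∑ b, Real.negMulLog (q a b c) := Finset.sum_comm
  have e2 : (∑ a, ∑ c, Real.negMulLog (∑ b, q a b c))
      = ∑ c, ∑ a, Real.negMulLog (∑ b, q a b c) := Finset.sum_comm
  have e3 : (∑ b, ∑ c, Real.negMulLog (∑ a, q a b c))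
      = ∑ c, ∑ b, Real.negMulLog (∑ a, q a b c) := Finset.sum_comm
  rw [e1, e2, e3]
  exact h

theorem stmt5 {Ω A1 A2 A3 B C : Type*} [Fintype Ω]
    [Fintype A1] [DecidableEq A1] [Fintype A2] [DecidableEq A2]
    [Fintype A3] [DecidableEq A3] [Fintype B] [DecidableEq B] [Fintype C] [DecidableEq C]
    (p : Ω → ℝ) (hp : ∀ ω, 0 ≤ p ω) (hsum : ∑ ω, p ω = 1)
    (X1 : Ω → A1) (X2 : Ω → A2) (X3 : Ω → A3) (Y : Ω → B) (Z : Ω → C)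
    (hindep : ∀ a1 a2 a3, rvDist p (fun ω => (X1 ω, X2 ω, X3 ω)) (a1, a2, a3)
      = rvDist p X1 a1 * rvDist p X2 a2 * rvDist p X3 a3) :
    rvMI p (fun ω => (X1 ω, X2 ω, X3 ω)) Y - rvMI p (fun ω => (X1 ω, X2 ω, X3 ω)) Z
        + rvCMI p X3 Y (fun ω => (X1 ω, X2 ω))
      ≤ rvCMI p (fun ω => (X1 ω, X3 ω)) Y X2 - rvMI p (fun ω => (X1 ω, X2 ω, X3 ω)) Z
        + rvCMI p (fun ω => (X2 ω, X3 ω)) Y X1 := by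
  classical
  -- independence of (X1, X2)
  have hd3 : ∑ a3, rvDist p X3 a3 = 1 := rvDist_sum' p hsum X3
  have hind12 : ∀ a b, rvDist p (fun ω => (X1 ω, X2 ω)) (a, b)
      = rvDist p X1 a * rvDist p X2 b := by
    intro a b
    rw [← rvDist_triple_thd p X1 X2 X3 a b]
    simp only [hindep]
    rw [← Finset.mul_sum, hd3, mul_one]
  -- entropy of independent pair splits
  have hH12 : rvEnt p (fun ω => (X1 ω, X2 ω)) = rvEnt p X1 + rvEnt p X2 := by
    unfold rvEnt
    rw [Fintype.sum_prod_type]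
    calc ∑ a, ∑ b, Real.negMulLog (rvDist p (fun ω => (X1 ω, X2 ω)) (a, b))
        = ∑ a, ∑ b, (rvDist p X2 b * Real.negMulLog (rvDist p X1 a)
            + rvDist p X1 a * Real.negMulLog (rvDist p X2 b)) := by
          refine Finset.sum_congr rfl fun a _ => Finset.sum_congr rfl fun b _ => ?_
          rw [hind12, Real.negMulLog_mul]
      _ = ∑ a, ((∑ b, rvDist p X2 b) * Real.negMulLog (rvDist p X1 a)
            + rvDist p X1 a * ∑ b, Real.negMulLog (rvDist p X2 b)) := by
          refine Finset.sum_congr rfl fun a _ => ?_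
          rw [Finset.sum_add_distrib, Finset.sum_mul, Finset.mul_sum]
      _ = ∑ a, (Real.negMulLog (rvDist p X1 a)
            + rvDist p X1 a * ∑ b, Real.negMulLog (rvDist p X2 b)) := by
          simp [rvDist_sum' p hsum X2]
      _ = ∑ a, Real.negMulLog (rvDist p X1 a) + ∑ a, Real.negMulLog (rvDist p X2 a) := by
          rw [Finset.sum_add_distrib, ← Finset.sum_mul, rvDist_sum' p hsum X1, one_mul]
  -- submodularity instance
  have hsubfinal : rvEnt p (fun ω => (X1 ω, X2 ω, Y ω)) + rvEnt p Y
      ≤ rvEnt p (fun ω => (X1 ω, Y ω)) + rvEnt p (fun ω => (X2 ω, Y ω)) := by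
    have h := submod3 (fun a b c => rvDist p (fun ω => (X1 ω, X2 ω, Y ω)) (a, b, c))
      (fun a b c => rvDist_nonneg' p hp _ _)
    simp only [rvDist_triple_mid, rvDist_triple_fst, rvDist_pair_snd] at h
    unfold rvEnt
    simp only [Fintype.sum_prod_type]
    exact h
  -- relabelings
  have hJ1 : rvEnt p (fun ω => ((X1 ω, X2 ω, X3 ω), Y ω))
      = rvEnt p (fun ω => (X1 ω, X2 ω, X3 ω, Y ω)) :=
    rvEnt_comp p (fun ω => (X1 ω, X2 ω, X3 ω, Y ω))
      (fun x => ((x.1, x.2.1, x.2.2.1), x.2.2.2)) (fun x y h => by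
        simp only [Prod.mk.injEq] at h; exact Prod.ext h.1.1 (Prod.ext h.1.2.1
          (Prod.ext h.1.2.2 h.2)))
  have hJ2 : rvEnt p (fun ω => (X3 ω, Y ω, (X1 ω, X2 ω)))
      = rvEnt p (fun ω => (X1 ω, X2 ω, X3 ω, Y ω)) :=
    rvEnt_comp p (fun ω => (X1 ω, X2 ω, X3 ω, Y ω))
      (fun x => (x.2.2.1, x.2.2.2, (x.1, x.2.1))) (fun x y h => by
        simp only [Prod.mk.injEq] at h; exact Prod.ext h.2.2.1 (Prod.ext h.2.2.2
          (Prod.ext h.1 h.2.1)))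
  have hJ3 : rvEnt p (fun ω => ((X1 ω, X3 ω), Y ω, X2 ω))
      = rvEnt p (fun ω => (X1 ω, X2 ω, X3 ω, Y ω)) :=
    rvEnt_comp p (fun ω => (X1 ω, X2 ω, X3 ω, Y ω))
      (fun x => ((x.1, x.2.2.1), x.2.2.2, x.2.1)) (fun x y h => by
        simp only [Prod.mk.injEq] at h; exact Prod.ext h.1.1 (Prod.ext h.2.2
          (Prod.ext h.1.2 h.2.1)))
  have hJ4 : rvEnt p (fun ω => ((X2 ω, X3 ω), Y ω, X1 ω))
      = rvEnt p (fun ω => (X1 ω, X2 ω, X3 ω, Y ω)) :=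
    rvEnt_comp p (fun ω => (X1 ω, X2 ω, X3 ω, Y ω))
      (fun x => ((x.2.1, x.2.2.1), x.2.2.2, x.1)) (fun x y h => by
        simp only [Prod.mk.injEq] at h; exact Prod.ext h.2.2 (Prod.ext h.1.1
          (Prod.ext h.1.2 h.2.1)))
  have hS2 : rvEnt p (fun ω => (X3 ω, (X1 ω, X2 ω)))
      = rvEnt p (fun ω => (X1 ω, X2 ω, X3 ω)) :=
    rvEnt_comp p (fun ω => (X1 ω, X2 ω, X3 ω))
      (fun x => (x.2.2, (x.1, x.2.1))) (fun x y h => by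
        simp only [Prod.mk.injEq] at h; exact Prod.ext h.2.1 (Prod.ext h.2.2 h.1))
  have hS3 : rvEnt p (fun ω => ((X1 ω, X3 ω), X2 ω))
      = rvEnt p (fun ω => (X1 ω, X2 ω, X3 ω)) :=
    rvEnt_comp p (fun ω => (X1 ω, X2 ω, X3 ω))
      (fun x => ((x.1, x.2.2), x.2.1)) (fun x y h => by
        simp only [Prod.mk.injEq] at h; exact Prod.ext h.1.1 (Prod.ext h.2 h.1.2))
  have hS4 : rvEnt p (fun ω => ((X2 ω, X3 ω), X1 ω))
      = rvEnt p (fun ω => (X1 ω, X2 ω, X3 ω)) :=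
    rvEnt_comp p (fun ω => (X1 ω, X2 ω, X3 ω))
      (fun x => ((x.2.1, x.2.2), x.1)) (fun x y h => by
        simp only [Prod.mk.injEq] at h; exact Prod.ext h.2 (Prod.ext h.1.1 h.1.2))
  have hU2 : rvEnt p (fun ω => (Y ω, (X1 ω, X2 ω)))
      = rvEnt p (fun ω => (X1 ω, X2 ω, Y ω)) :=
    rvEnt_comp p (fun ω => (X1 ω, X2 ω, Y ω))
      (fun x => (x.2.2, (x.1, x.2.1))) (fun x y h => by
        simp only [Prod.mk.injEq] at h; exact Prod.ext h.2.1 (Prod.ext h.2.2 h.1))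
  have hY1 : rvEnt p (fun ω => (Y ω, X1 ω)) = rvEnt p (fun ω => (X1 ω, Y ω)) :=
    rvEnt_comp p (fun ω => (X1 ω, Y ω)) (fun x => (x.2, x.1)) (fun x y h => by
      simp only [Prod.mk.injEq] at h; exact Prod.ext h.2 h.1)
  have hY2 : rvEnt p (fun ω => (Y ω, X2 ω)) = rvEnt p (fun ω => (X2 ω, Y ω)) :=
    rvEnt_comp p (fun ω => (X2 ω, Y ω)) (fun x => (x.2, x.1)) (fun x y h => by
      simp only [Prod.mk.injEq] at h; exact Prod.ext h.2 h.1)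
  simp only [rvMI, rvCMI]
  linarith [hJ1, hJ2, hJ3, hJ4, hS2, hS3, hS4, hU2, hY1, hY2, hH12, hsubfinal]
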